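/- Let G be an undirected graph on n vertices. If for every symmetric positive semidefinite singular n×n matrix A (i.e. A ≥ 0 and det A = 0) the thresholded matrix A_G is positive semidefinite, then G is a disjoint union of complete components. -/

import Mathlib

def threshold {n : ℕ} (G : SimpleGraph (Fin n)) [DecidableRel G.Adj]
    (A : Matrix (Fin n) (Fin n) ℝ) : Matrix (Fin n) (Fin n) ℝ :=
  Matrix.of fun i j => if i = j ∨ G.Adj i j then A i j else 0

/-!
If `a ∼ b ∼ c` is an induced path in `G`, take `v = e_a - e_b + e_c` and the singular
positive semidefinite rank-one matrix `A = v vᵀ`. Thresholding `A` only deletes the entries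
`A_ac = A_ca = 1`, so the quadratic form of `A_G` at `e_a + e_b + e_c` is
`(v_a + v_b + v_c)² - 2 v_a v_c = -1`. Hence each path of length two in `G` spans a triangle,
and by induction along walks any two distinct vertices of a component are adjacent.
-/

open Matrix

namespace SimpleGraph

variable {V : Type*} {G : SimpleGraph V}

theorem Walk.eq_or_adj_of_adj_trans
    (htrans : ∀ ⦃a b c⦄, G.Adj a b → G.Adj b c → a ≠ c → G.Adj a c) {u v : V}
    (p : G.Walk u v) : u = v ∨ G.Adj u v := by
  induction p with
  | nil => exact .inl rfl
  | @cons a b c hab _ ih =>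
    rcases ih with rfl | hbc
    · exact .inr hab
    · by_cases hac : a = c
      · exact .inl hac
      · exact .inr (htrans hab hbc hac)

theorem Reachable.adj_of_adj_trans
    (htrans : ∀ ⦃a b c⦄, G.Adj a b → G.Adj b c → a ≠ c → G.Adj a c) {u v : V}
    (huv : G.Reachable u v) (hne : u ≠ v) : G.Adj u v :=
  (huv.some.eq_or_adj_of_adj_trans htrans).resolve_left hne

end SimpleGraph

section InducedPath

variable {n : ℕ} (G : SimpleGraph (Fin n)) [DecidableRel G.Adj] {a b c : Fin n}

theorem threshold_quadForm_of_induced_path (hab : G.Adj a b) (hbc : G.Adj b c)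
    (hac : a ≠ c) (hnac : ¬G.Adj a c) :
    let v : Fin n → ℝ := Pi.single a 1 - Pi.single b 1 + Pi.single c 1
    let x : Fin n → ℝ := Pi.single a 1 + Pi.single b 1 + Pi.single c 1
    x ⬝ᵥ threshold G (vecMulVec v v) *ᵥ x = -1 := by
  intro v x
  have hab' := hab.ne
  have hbc' := hbc.ne
  have hnca : ¬G.Adj c a := fun h => hnac h.symm
  simp [v, x, threshold, mulVec_add, dotProduct_add, add_dotProduct, mulVec_single,
    single_dotProduct, vecMulVec_apply, Pi.single_apply, hab, hbc, hab.symm, hbc.symm, hnac,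
    hnca, hab', hbc', hac, hab'.symm, hbc'.symm, hac.symm]

theorem not_posSemidef_threshold_of_induced_path (hab : G.Adj a b) (hbc : G.Adj b c)
    (hac : a ≠ c) (hnac : ¬G.Adj a c) :
    let v : Fin n → ℝ := Pi.single a 1 - Pi.single b 1 + Pi.single c 1
    ¬(threshold G (vecMulVec v v)).PosSemidef := by
  intro v hpsd
  have := hpsd.dotProduct_mulVec_nonneg (Pi.single a 1 + Pi.single b 1 + Pi.single c 1)
  rw [star_trivial, threshold_quadForm_of_induced_path G hab hbc hac hnac] at this
  norm_num at this

end InducedPath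

theorem stmt_3 {n : ℕ} (G : SimpleGraph (Fin n)) [DecidableRel G.Adj]
    (h : ∀ A : Matrix (Fin n) (Fin n) ℝ, A.IsSymm → A.PosSemidef → A.det = 0 →
      (threshold G A).PosSemidef) :
    ∀ i j : Fin n, i ≠ j → G.Reachable i j → G.Adj i j := by
  refine fun i j hij hreach => hreach.adj_of_adj_trans (fun a b c hab hbc hac => ?_) hij
  by_contra hnac
  have : Nontrivial (Fin n) := ⟨⟨a, b, hab.ne⟩⟩
  set v : Fin n → ℝ := Pi.single a 1 - Pi.single b 1 + Pi.single c 1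
  exact not_posSemidef_threshold_of_induced_path G hab hbc hac hnac <|
    h (vecMulVec v v) (transpose_vecMulVec v v)
      (by simpa using posSemidef_vecMulVec_self_star v) (det_vecMulVec v v)
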